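/- Let F ∈ 𝓕, 1 ≤ p < ∞, g ∈ BMO_F ∩ Lᵖ(ℝ²), and f ∈ LMO_F ∩ L^∞(ℝ²). Then fg ∈ BMO_F ∩ Lᵖ and ‖fg‖_{BMO_F} ≤ C·‖f‖_{LMO_F ∩ L^∞}·‖g‖_{BMO_F ∩ Lᵖ}, with C independent of f and g. -/

import Mathlib

open MeasureTheory Metric Real Filter

noncomputable section

/-- The plane `ℝ²`. -/
abbrev Plane := EuclideanSpace ℝ (Fin 2)

/-- Average of `f` over the ball `B(c,r)` (with respect to Lebesgue measure). -/
def ballAvg (f : Plane → ℝ) (c : Plane) (r : ℝ) : ℝ := ⨍ y in ball c r, f y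

/-- `K` is a bound for all mean oscillations of `f` (i.e. `‖f‖_BMO ≤ K`). -/
def OscBound (f : Plane → ℝ) (K : ℝ) : Prop :=
  ∀ c r, 0 < r → (⨍ y in ball c r, |f y - ballAvg f c r|) ≤ K

/-- The `BMO` seminorm of `f`, as a supremum of mean oscillations. -/
def bmoNorm (f : Plane → ℝ) : ℝ :=
  sSup {m | ∃ c r, 0 < r ∧ m = ⨍ y in ball c r, |f y - ballAvg f c r|}

/-- `K` bounds the second (weighted pair of balls) part of the `BMO_F` norm of `f`. -/
def PairBoundF (F : ℝ → ℝ) (f : Plane → ℝ) (K : ℝ) : Prop :=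
  ∀ c₁ r₁ c₂ r₂, 0 < r₂ → 0 < r₁ → r₁ ≤ 1 → ball c₂ (2 * r₂) ⊆ ball c₁ r₁ →
    |ballAvg f c₂ r₂ - ballAvg f c₁ r₁| ≤ K * F ((1 - Real.log r₂) / (1 - Real.log r₁))

/-- The `BMO_F` norm of `f`. -/
def bmoFNorm (F : ℝ → ℝ) (f : Plane → ℝ) : ℝ :=
  bmoNorm f +
    sSup {m | ∃ c₁ r₁ c₂ r₂, 0 < r₂ ∧ 0 < r₁ ∧ r₁ ≤ 1 ∧ ball c₂ (2 * r₂) ⊆ ball c₁ r₁ ∧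
      m = |ballAvg f c₂ r₂ - ballAvg f c₁ r₁| / F ((1 - Real.log r₂) / (1 - Real.log r₁))}

/-- Membership in the space `BMO_F`. -/
def MemBMOF (F : ℝ → ℝ) (f : Plane → ℝ) : Prop :=
  LocallyIntegrable f volume ∧ ∃ K, OscBound f K ∧ PairBoundF F f K

/-- The `LMO_F` norm of `f`. -/
def lmoFNorm (F : ℝ → ℝ) (f : Plane → ℝ) : ℝ :=
  sSup {m | ∃ c r, 0 < r ∧ r ≤ 1 ∧
      m = F (1 - Real.log r) * ⨍ y in ball c r, |f y - ballAvg f c r|} +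
  sSup {m | ∃ c₁ r₁ c₂ r₂, 0 < r₂ ∧ 0 < r₁ ∧ r₁ ≤ 1 ∧ ball c₂ (2 * r₂) ⊆ ball c₁ r₁ ∧
      m = F (1 - Real.log r₁) * |ballAvg f c₂ r₂ - ballAvg f c₁ r₁|}

/-- Membership in the space `LMO_F`. -/
def MemLMOF (F : ℝ → ℝ) (f : Plane → ℝ) : Prop :=
  LocallyIntegrable f volume ∧ ∃ K,
    (∀ c r, 0 < r → r ≤ 1 →
      F (1 - Real.log r) * ⨍ y in ball c r, |f y - ballAvg f c r| ≤ K) ∧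
    (∀ c₁ r₁ c₂ r₂, 0 < r₂ → 0 < r₁ → r₁ ≤ 1 → ball c₂ (2 * r₂) ⊆ ball c₁ r₁ →
      F (1 - Real.log r₁) * |ballAvg f c₂ r₂ - ballAvg f c₁ r₁| ≤ K)

/-- The `L^∞` norm. -/
def supNorm (f : Plane → ℝ) : ℝ := (eLpNorm f ⊤ volume).toReal

/-- The `L^p` norm for a real exponent `p`. -/
def lpNorm (p : ℝ) (f : Plane → ℝ) : ℝ := (eLpNorm f (ENNReal.ofReal p) volume).toReal

/-- The class `𝓕` of admissible weight functions: nondecreasing on `[1,∞)`, `≥ 1` there,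
blowing up at infinity, with the exponential-integral decay condition and submultiplicativity. -/
def ClassF (F : ℝ → ℝ) : Prop :=
  (∀ x, 1 ≤ x → 1 ≤ F x) ∧ (∀ x y, 1 ≤ x → x ≤ y → F x ≤ F y) ∧
  Tendsto F atTop atTop ∧
  ∃ C, 0 < C ∧
    (∀ l x, 1 ≤ l → l ≤ x →
      (∫ y in Set.Ici x, Real.exp (-y / l) * F y) ≤ C * l * Real.exp (-x / l) * F x) ∧
    (∀ x y, 1 ≤ x → 1 ≤ y → F (x * y) ≤ C * F x * F y)

end

/-! The product is estimated ball by ball. On a ball `B` of radius `r ≤ 1`,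
`fg - f_B g_B = f (g - g_B) + g_B (f - f_B)`. The average `g_B` of `g ∈ BMO_F ∩ Lᵖ` grows at most
like `F(1 - log r)` (Hölder's inequality on balls of radius `≥ 1/2`, comparison with the
concentric unit ball for smaller ones), and this growth is exactly compensated by the `LMO_F`
decay `F(1 - log r) ⨍_B |f - f_B| ≲ 1`. On balls of radius `> 1` the mean oscillation of `fg` is
at most `2 ‖f‖_∞ ⨍_B |g|`, again controlled by Hölder. The same splitting of
`f_{B₂} g_{B₂} - f_{B₁} g_{B₁}` gives the pair condition of `BMO_F`. -/

namespace MeasureTheory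

variable {α : Type*} [MeasurableSpace α] {ν : Measure α} {f g : α → ℝ}

lemma average_nonneg (hf : 0 ≤ᵐ[ν] f) : 0 ≤ ⨍ x, f x ∂ν := by
  rw [average_eq, smul_eq_mul]
  exact mul_nonneg (by positivity) (integral_nonneg_of_ae hf)

lemma average_mono_of_nonneg (hf : 0 ≤ᵐ[ν] f) (hg : Integrable g ν) (h : f ≤ᵐ[ν] g) :
    ⨍ x, f x ∂ν ≤ ⨍ x, g x ∂ν := by
  simp only [average_eq, smul_eq_mul]
  exact mul_le_mul_of_nonneg_left (integral_mono_of_nonneg hf hg h) (by positivity)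

lemma average_add (hf : Integrable f ν) (hg : Integrable g ν) :
    ⨍ x, f x + g x ∂ν = ⨍ x, f x ∂ν + ⨍ x, g x ∂ν := by
  simp only [average_eq, integral_add hf hg, smul_add]

lemma average_const_mul (c : ℝ) : ⨍ x, c * f x ∂ν = c * ⨍ x, f x ∂ν := by
  simp only [average_eq, integral_const_mul, smul_eq_mul, mul_left_comm]

lemma abs_average_le_average_abs : |⨍ x, f x ∂ν| ≤ ⨍ x, |f x| ∂ν := by
  simp only [average_eq, smul_eq_mul, abs_mul, abs_of_nonneg (inv_nonneg.2 measureReal_nonneg)]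
  gcongr
  exact abs_integral_le_integral_abs

variable [IsFiniteMeasure ν]

lemma average_abs_mul_sub_le {M : ℝ} (hf : Integrable f ν) (hg : Integrable g ν)
    (hfM : ∀ᵐ x ∂ν, |f x| ≤ M) :
    ⨍ x, |f x * g x - (⨍ y, f y ∂ν) * ⨍ y, g y ∂ν| ∂ν ≤
      M * ⨍ x, |g x - ⨍ y, g y ∂ν| ∂ν + |⨍ y, g y ∂ν| * ⨍ x, |f x - ⨍ y, f y ∂ν| ∂ν := by
  set a := ⨍ y, f y ∂ν
  set b := ⨍ y, g y ∂ν
  have hg' : Integrable (fun x => M * |g x - b|) ν := (hg.sub (integrable_const b)).abs.const_mul M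
  have hf' : Integrable (fun x => |b| * |f x - a|) ν :=
    (hf.sub (integrable_const a)).abs.const_mul |b|
  calc ⨍ x, |f x * g x - a * b| ∂ν ≤ ⨍ x, M * |g x - b| + |b| * |f x - a| ∂ν := by
        refine average_mono_of_nonneg (.of_forall fun _ => abs_nonneg _) (hg'.add hf') ?_
        filter_upwards [hfM] with x hx
        calc |f x * g x - a * b| = |f x * (g x - b) + b * (f x - a)| := by ring_nf
          _ ≤ |f x| * |g x - b| + |b| * |f x - a| := by
            simpa only [abs_mul] using abs_add_le (f x * (g x - b)) (b * (f x - a))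
          _ ≤ M * |g x - b| + |b| * |f x - a| := by gcongr
    _ = M * ⨍ x, |g x - b| ∂ν + |b| * ⨍ x, |f x - a| ∂ν := by
        rw [average_add hg' hf', average_const_mul, average_const_mul]

variable [NeZero ν]

lemma average_sub_const (hf : Integrable f ν) (a : ℝ) :
    ⨍ x, f x - a ∂ν = ⨍ x, f x ∂ν - a := by
  simpa [sub_eq_add_neg, average_const] using average_add hf (integrable_const (-a))

lemma abs_average_sub_le (hf : Integrable f ν) (a : ℝ) :
    |⨍ x, f x ∂ν - a| ≤ ⨍ x, |f x - a| ∂ν := by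
  rw [← average_sub_const hf]
  exact abs_average_le_average_abs

lemma average_abs_sub_average_le (hf : Integrable f ν) (a : ℝ) :
    ⨍ x, |f x - ⨍ y, f y ∂ν| ∂ν ≤ 2 * ⨍ x, |f x - a| ∂ν := by
  have hfa : Integrable (fun x => |f x - a|) ν := (hf.sub (integrable_const a)).abs
  calc ⨍ x, |f x - ⨍ y, f y ∂ν| ∂ν
      ≤ ⨍ x, |f x - a| + |⨍ y, f y ∂ν - a| ∂ν := by
        refine average_mono_of_nonneg (.of_forall fun _ => abs_nonneg _)
          (hfa.add (integrable_const _)) (.of_forall fun x => ?_)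
        rw [abs_sub_comm _ a]
        exact abs_sub_le (f x) a _
    _ = ⨍ x, |f x - a| ∂ν + |⨍ y, f y ∂ν - a| := by
        rw [average_add hfa (integrable_const _), average_const]
    _ ≤ 2 * ⨍ x, |f x - a| ∂ν := by linarith [abs_average_sub_le hf a]

lemma abs_average_le_of_ae_abs_le {M : ℝ} (hfM : ∀ᵐ x ∂ν, |f x| ≤ M) : |⨍ x, f x ∂ν| ≤ M :=
  abs_average_le_average_abs.trans <|
    (average_mono_of_nonneg (.of_forall fun _ => abs_nonneg _) (integrable_const M) hfM).trans_eq
      (average_const ν M)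

lemma average_abs_le_rpow_mul_eLpNorm {p : ℝ} (hp : 1 ≤ p)
    (hg : MemLp g (ENNReal.ofReal p) ν) :
    ⨍ x, |g x| ∂ν ≤ ν.real Set.univ ^ (-p⁻¹) * (eLpNorm g (ENNReal.ofReal p) ν).toReal := by
  have hv : 0 < ν.real Set.univ := measureReal_univ_pos
  have hexp : 1 / ENNReal.toReal 1 - 1 / (ENNReal.ofReal p).toReal = 1 - p⁻¹ := by
    rw [ENNReal.toReal_ofReal (by linarith)]; simp
  have hp' : 0 ≤ 1 - p⁻¹ := sub_nonneg.2 (inv_le_one_of_one_le₀ hp)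
  have holder := ENNReal.toReal_mono
    (ENNReal.mul_ne_top hg.eLpNorm_ne_top (ENNReal.rpow_ne_top_of_nonneg (hexp ▸ hp')
      (measure_ne_top ν Set.univ)))
    (eLpNorm_le_eLpNorm_mul_rpow_measure_univ (ENNReal.one_le_ofReal.2 hp) hg.1)
  rw [toReal_eLpNorm hg.1, lpNorm_one_eq_integral_norm hg.1, hexp, ENNReal.toReal_mul,
    ← ENNReal.toReal_rpow, ← measureReal_def] at holder
  calc ⨍ x, |g x| ∂ν = (ν.real Set.univ)⁻¹ * ∫ x, ‖g x‖ ∂ν := by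
        rw [average_eq, smul_eq_mul]; rfl
    _ ≤ (ν.real Set.univ)⁻¹ * ((eLpNorm g (ENNReal.ofReal p) ν).toReal *
          ν.real Set.univ ^ (1 - p⁻¹)) := by gcongr
    _ = ν.real Set.univ ^ (-p⁻¹) * (eLpNorm g (ENNReal.ofReal p) ν).toReal := by
        rw [Real.rpow_sub hv, Real.rpow_one, Real.rpow_neg hv.le]
        field_simp

end MeasureTheory

section Balls

variable {X : Type*} [PseudoMetricSpace X] [MeasurableSpace X] {μ : Measure X}

instance isFiniteMeasure_restrict_ball [ProperSpace X] [IsFiniteMeasureOnCompacts μ] (c : X)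
    (r : ℝ) : IsFiniteMeasure (μ.restrict (ball c r)) :=
  isFiniteMeasure_restrict.2 measure_ball_lt_top.ne

lemma neZero_restrict_ball [μ.IsOpenPosMeasure] (c : X) {r : ℝ} (hr : 0 < r) :
    NeZero (μ.restrict (ball c r)) :=
  ⟨by rw [Ne, Measure.restrict_eq_zero]; exact (measure_ball_pos μ c hr).ne'⟩

lemma MeasureTheory.LocallyIntegrable.integrableOn_ball [ProperSpace X] {f : X → ℝ}
    (hf : LocallyIntegrable f μ) (c : X) (r : ℝ) : IntegrableOn f (ball c r) μ :=
  (hf.integrableOn_isCompact (isCompact_closedBall c r)).mono_set ball_subset_closedBall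

end Balls

lemma le_of_ball_subset_ball {E : Type*} [NormedAddCommGroup E] [NormedSpace ℝ E] [Nontrivial E]
    {x y : E} {r s : ℝ} (hr : 0 < r) (h : ball x r ⊆ ball y s) : r ≤ s := by
  have hs : 0 < s := pos_of_mem_ball (h (mem_ball_self hr))
  have := diam_mono h isBounded_ball
  rw [diam_ball_eq x hr.le, diam_ball_eq y hs.le] at this
  linarith

lemma one_le_one_sub_log {r : ℝ} (hr : 0 < r) (hr1 : r ≤ 1) : 1 ≤ 1 - log r := by
  linarith [log_nonpos hr.le hr1]

lemma one_le_div_one_sub_log_of_ball_subset {c₁ c₂ : Plane} {r₁ r₂ : ℝ} (h₂ : 0 < r₂)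
    (h₁ : r₁ ≤ 1) (h : ball c₂ (2 * r₂) ⊆ ball c₁ r₁) :
    1 ≤ (1 - log r₂) / (1 - log r₁) := by
  have h₂₁ : r₂ ≤ r₁ := by linarith [le_of_ball_subset_ball (by positivity) h]
  rw [one_le_div (by linarith [one_le_one_sub_log (h₂.trans_le h₂₁) h₁])]
  linarith [log_le_log h₂ h₂₁]

variable {F : ℝ → ℝ} {f g : Plane → ℝ} {K K' : ℝ}

lemma OscBound.nonneg (h : OscBound g K) : 0 ≤ K :=
  (average_nonneg (.of_forall fun _ => abs_nonneg _)).trans (h 0 1 one_pos)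

lemma OscBound.mono (h : OscBound g K) (hK : K ≤ K') : OscBound g K' :=
  fun c r hr => (h c r hr).trans hK

lemma PairBoundF.mono (hF1 : ∀ x, 1 ≤ x → 1 ≤ F x) (h : PairBoundF F g K) (hK : K ≤ K') :
    PairBoundF F g K' := fun c₁ r₁ c₂ r₂ h₂ h₁ h₁1 hsub =>
  (h c₁ r₁ c₂ r₂ h₂ h₁ h₁1 hsub).trans <| mul_le_mul_of_nonneg_right hK <|
    zero_le_one.trans (hF1 _ (one_le_div_one_sub_log_of_ball_subset h₂ h₁1 hsub))

lemma OscBound.bmoNorm (h : OscBound g K) : OscBound g (bmoNorm g) := fun c r hr =>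
  le_csSup ⟨K, by rintro _ ⟨c', r', hr', rfl⟩; exact h c' r' hr'⟩ ⟨c, r, hr, rfl⟩

lemma bmoNorm_le (h : OscBound g K) : bmoNorm g ≤ K :=
  Real.sSup_le (by rintro _ ⟨c, r, hr, rfl⟩; exact h c r hr) h.nonneg

noncomputable def bmoFPairNorm (F : ℝ → ℝ) (f : Plane → ℝ) : ℝ :=
  sSup {m | ∃ c₁ r₁ c₂ r₂, 0 < r₂ ∧ 0 < r₁ ∧ r₁ ≤ 1 ∧ ball c₂ (2 * r₂) ⊆ ball c₁ r₁ ∧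
      m = |ballAvg f c₂ r₂ - ballAvg f c₁ r₁| / F ((1 - log r₂) / (1 - log r₁))}

section PairNorm

variable (hF1 : ∀ x, 1 ≤ x → 1 ≤ F x)
include hF1

lemma apply_div_one_sub_log_pos {c₁ c₂ : Plane} {r₁ r₂ : ℝ} (h₂ : 0 < r₂) (h₁ : r₁ ≤ 1)
    (h : ball c₂ (2 * r₂) ⊆ ball c₁ r₁) : 0 < F ((1 - log r₂) / (1 - log r₁)) :=
  zero_lt_one.trans_le (hF1 _ (one_le_div_one_sub_log_of_ball_subset h₂ h₁ h))

lemma bmoFPairNorm_nonneg : 0 ≤ bmoFPairNorm F g := by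
  refine Real.sSup_nonneg ?_
  rintro _ ⟨c₁, r₁, c₂, r₂, h₂, -, h₁1, hsub, rfl⟩
  exact div_nonneg (abs_nonneg _) (apply_div_one_sub_log_pos hF1 h₂ h₁1 hsub).le

lemma bmoFPairNorm_le (h : PairBoundF F g K) (hK : 0 ≤ K) : bmoFPairNorm F g ≤ K := by
  refine Real.sSup_le ?_ hK
  rintro _ ⟨c₁, r₁, c₂, r₂, h₂, h₁, h₁1, hsub, rfl⟩
  rw [div_le_iff₀ (apply_div_one_sub_log_pos hF1 h₂ h₁1 hsub)]
  exact h c₁ r₁ c₂ r₂ h₂ h₁ h₁1 hsub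

lemma PairBoundF.bmoFPairNorm (h : PairBoundF F g K) : PairBoundF F g (bmoFPairNorm F g) := by
  intro c₁ r₁ c₂ r₂ h₂ h₁ h₁1 hsub
  rw [← div_le_iff₀ (apply_div_one_sub_log_pos hF1 h₂ h₁1 hsub)]
  refine le_csSup ⟨K, ?_⟩ ⟨c₁, r₁, c₂, r₂, h₂, h₁, h₁1, hsub, rfl⟩
  rintro _ ⟨c₁, r₁, c₂, r₂, h₂, h₁, h₁1, hsub, rfl⟩
  rw [div_le_iff₀ (apply_div_one_sub_log_pos hF1 h₂ h₁1 hsub)]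
  exact h c₁ r₁ c₂ r₂ h₂ h₁ h₁1 hsub

lemma bmoFNorm_le_add (hosc : OscBound g K) (hpair : PairBoundF F g K') (hK' : 0 ≤ K') :
    bmoFNorm F g ≤ K + K' :=
  add_le_add (bmoNorm_le hosc) (bmoFPairNorm_le hF1 hpair hK')

lemma MemBMOF.oscBound (hg : MemBMOF F g) : OscBound g (bmoFNorm F g) := by
  obtain ⟨-, K, hosc, -⟩ := hg
  exact hosc.bmoNorm.mono (le_add_of_nonneg_right (bmoFPairNorm_nonneg hF1))

lemma MemBMOF.pairBoundF (hg : MemBMOF F g) : PairBoundF F g (bmoFNorm F g) := by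
  obtain ⟨-, K, hosc, hpair⟩ := hg
  exact (hpair.bmoFPairNorm hF1).mono hF1 (le_add_of_nonneg_left hosc.bmoNorm.nonneg)

end PairNorm

def LmoBoundF (F : ℝ → ℝ) (f : Plane → ℝ) (K : ℝ) : Prop :=
  (∀ c r, 0 < r → r ≤ 1 → F (1 - log r) * ⨍ y in ball c r, |f y - ballAvg f c r| ≤ K) ∧
  (∀ c₁ r₁ c₂ r₂, 0 < r₂ → 0 < r₁ → r₁ ≤ 1 → ball c₂ (2 * r₂) ⊆ ball c₁ r₁ →
    F (1 - log r₁) * |ballAvg f c₂ r₂ - ballAvg f c₁ r₁| ≤ K)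

lemma LmoBoundF.mono (h : LmoBoundF F f K) (hK : K ≤ K') : LmoBoundF F f K' :=
  ⟨fun c r hr hr1 => (h.1 c r hr hr1).trans hK,
    fun c₁ r₁ c₂ r₂ h₂ h₁ h₁1 hsub => (h.2 c₁ r₁ c₂ r₂ h₂ h₁ h₁1 hsub).trans hK⟩

lemma LmoBoundF.nonneg (hF1 : ∀ x, 1 ≤ x → 1 ≤ F x) (h : LmoBoundF F f K) : 0 ≤ K :=
  (mul_nonneg (zero_le_one.trans (hF1 _ (one_le_one_sub_log one_pos le_rfl)))
    (average_nonneg (.of_forall fun _ => abs_nonneg _))).trans (h.1 0 1 one_pos le_rfl)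

lemma MemLMOF.lmoBoundF (hF1 : ∀ x, 1 ≤ x → 1 ≤ F x) (hf : MemLMOF F f) :
    LmoBoundF F f (lmoFNorm F f) := by
  obtain ⟨-, K, hosc, hpair⟩ := hf
  have hF0 : ∀ r, 0 < r → r ≤ 1 → 0 ≤ F (1 - log r) := fun r hr hr1 =>
    zero_le_one.trans (hF1 _ (one_le_one_sub_log hr hr1))
  have hosc0 : 0 ≤ sSup {m | ∃ c r, 0 < r ∧ r ≤ 1 ∧
      m = F (1 - log r) * ⨍ y in ball c r, |f y - ballAvg f c r|} := by
    refine Real.sSup_nonneg ?_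
    rintro _ ⟨c, r, hr, hr1, rfl⟩
    exact mul_nonneg (hF0 r hr hr1) (average_nonneg (.of_forall fun _ => abs_nonneg _))
  have hpair0 : 0 ≤ sSup {m | ∃ c₁ r₁ c₂ r₂, 0 < r₂ ∧ 0 < r₁ ∧ r₁ ≤ 1 ∧
      ball c₂ (2 * r₂) ⊆ ball c₁ r₁ ∧
      m = F (1 - log r₁) * |ballAvg f c₂ r₂ - ballAvg f c₁ r₁|} := by
    refine Real.sSup_nonneg ?_
    rintro _ ⟨c₁, r₁, c₂, r₂, -, h₁, h₁1, -, rfl⟩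
    exact mul_nonneg (hF0 r₁ h₁ h₁1) (abs_nonneg _)
  refine ⟨fun c r hr hr1 => le_add_of_le_of_nonneg ?_ hpair0,
    fun c₁ r₁ c₂ r₂ h₂ h₁ h₁1 hsub => le_add_of_nonneg_of_le hosc0 ?_⟩
  · refine le_csSup ⟨K, ?_⟩ ⟨c, r, hr, hr1, rfl⟩
    rintro _ ⟨c, r, hr, hr1, rfl⟩
    exact hosc c r hr hr1
  · refine le_csSup ⟨K, ?_⟩ ⟨c₁, r₁, c₂, r₂, h₂, h₁, h₁1, hsub, rfl⟩
    rintro _ ⟨c₁, r₁, c₂, r₂, h₂, h₁, h₁1, hsub, rfl⟩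
    exact hpair c₁ r₁ c₂ r₂ h₂ h₁ h₁1 hsub

/-- Dominates `|B|^(-1/p)` for all `p ≥ 1` and all balls `B` of radius `≥ 1/2`,
since `|B| ≥ |B(0, 1/2)|`. -/
noncomputable def holderConst : ℝ := max 1 (volume.real (ball (0 : Plane) 2⁻¹))⁻¹

lemma one_le_holderConst : 1 ≤ holderConst := le_max_left _ _

lemma rpow_neg_le_max_one_inv {a v t : ℝ} (ha : 0 < a) (hav : a ≤ v) (ht0 : 0 ≤ t)
    (ht1 : t ≤ 1) : v ^ (-t) ≤ max 1 a⁻¹ := by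
  have hv : 0 < v := ha.trans_le hav
  rw [rpow_neg hv.le, ← inv_rpow hv.le]
  rcases le_or_gt v⁻¹ 1 with h | h
  · exact (rpow_le_one (by positivity) h ht0).trans (le_max_left _ _)
  · calc v⁻¹ ^ t ≤ v⁻¹ ^ (1 : ℝ) := rpow_le_rpow_of_exponent_le h.le ht1
      _ ≤ max 1 a⁻¹ := by rw [rpow_one]; exact (inv_anti₀ ha hav).trans (le_max_right _ _)

lemma setAverage_abs_ball_le {p : ℝ} (hp : 1 ≤ p) (hg : MemLp g (ENNReal.ofReal p) volume)
    (c : Plane) {r : ℝ} (hr : 2⁻¹ ≤ r) : ⨍ y in ball c r, |g y| ≤ holderConst * lpNorm p g := by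
  have hr0 : 0 < r := lt_of_lt_of_le (by norm_num) hr
  have := neZero_restrict_ball (μ := volume) c hr0
  have hvol : volume.real (ball (0 : Plane) 2⁻¹) ≤ (volume.restrict (ball c r)).real Set.univ := by
    rw [measureReal_restrict_apply_univ, measureReal_def, measureReal_def,
      ← Measure.addHaar_ball_center volume c]
    exact ENNReal.toReal_mono measure_ball_lt_top.ne (measure_mono (ball_subset_ball hr))
  have hvol0 : 0 < volume.real (ball (0 : Plane) 2⁻¹) :=
    ENNReal.toReal_pos (measure_ball_pos volume 0 (by norm_num)).ne' measure_ball_lt_top.ne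
  calc _ ≤ _ := average_abs_le_rpow_mul_eLpNorm hp (hg.restrict _)
    _ ≤ holderConst * lpNorm p g :=
      mul_le_mul (rpow_neg_le_max_one_inv hvol0 hvol (by positivity) (inv_le_one_of_one_le₀ hp))
        (ENNReal.toReal_mono hg.eLpNorm_ne_top (eLpNorm_mono_measure _ Measure.restrict_le_self))
        ENNReal.toReal_nonneg (zero_le_one.trans one_le_holderConst)

lemma abs_ballAvg_le_of_memBMOF (hF1 : ∀ x, 1 ≤ x → 1 ≤ F x) {p : ℝ} (hp : 1 ≤ p)
    (hg : MemBMOF F g) (hgp : MemLp g (ENNReal.ofReal p) volume) (c : Plane) {r : ℝ}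
    (hr : 0 < r) (hr1 : r ≤ 1) :
    |ballAvg g c r| ≤ holderConst * (bmoFNorm F g + lpNorm p g) * F (1 - log r) := by
  have hF : 1 ≤ F (1 - log r) := hF1 _ (one_le_one_sub_log hr hr1)
  have hB : 0 ≤ bmoFNorm F g := (hg.oscBound hF1).nonneg
  have hL : 0 ≤ lpNorm p g := ENNReal.toReal_nonneg
  have hκ := one_le_holderConst
  have hlarge : ∀ ρ, 2⁻¹ ≤ ρ → |ballAvg g c ρ| ≤ holderConst * lpNorm p g := fun ρ hρ =>
    abs_average_le_average_abs.trans (setAverage_abs_ball_le hp hgp c hρ)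
  have key : |ballAvg g c r| ≤ bmoFNorm F g * F (1 - log r) + holderConst * lpNorm p g := by
    rcases le_or_gt 2⁻¹ r with hr2 | hr2
    · exact (hlarge r hr2).trans (le_add_of_nonneg_left (by positivity))
    · have hpair := hg.pairBoundF hF1 c 1 c r hr one_pos le_rfl (ball_subset_ball (by linarith))
      rw [log_one, sub_zero, div_one] at hpair
      linarith [abs_sub_abs_le_abs_sub (ballAvg g c r) (ballAvg g c 1), hlarge 1 (by norm_num)]
  nlinarith [mul_nonneg (mul_nonneg (sub_nonneg.2 hκ) hB) (zero_le_one.trans hF),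
    mul_nonneg (mul_nonneg (zero_le_one.trans hκ) hL) (sub_nonneg.2 hF)]

lemma ae_abs_le_supNorm (hf : MemLp f ⊤ volume) : ∀ᵐ x, |f x| ≤ supNorm f := by
  simpa only [supNorm, toReal_eLpNorm hf.1, Real.norm_eq_abs] using ae_le_lpNorm_exponent_top hf

section Product

variable {A G : ℝ}

lemma integrableOn_ball_mul (hfl : LocallyIntegrable f volume) (hgl : LocallyIntegrable g volume)
    (hfA : ∀ᵐ x, |f x| ≤ A) (c : Plane) (r : ℝ) :
    IntegrableOn (fun x => f x * g x) (ball c r) volume :=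
  (hgl.integrableOn_ball c r).bdd_mul hfl.aestronglyMeasurable.restrict (ae_restrict_of_ae hfA)

lemma nonneg_of_ae_abs_le (hfA : ∀ᵐ x, |f x| ≤ A) : 0 ≤ A :=
  let ⟨_, hx⟩ := hfA.exists
  (abs_nonneg _).trans hx

lemma setAverage_abs_mul_sub_le (hfl : LocallyIntegrable f volume)
    (hgl : LocallyIntegrable g volume) (hfA : ∀ᵐ x, |f x| ≤ A) (hf : LmoBoundF F f A)
    (hgosc : OscBound g G) (hgavg : ∀ c r, 0 < r → r ≤ 1 → |ballAvg g c r| ≤ G * F (1 - log r))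
    (c : Plane) {r : ℝ} (hr : 0 < r) (hr1 : r ≤ 1) :
    ⨍ y in ball c r, |f y * g y - ballAvg f c r * ballAvg g c r| ≤ 2 * A * G := by
  have := neZero_restrict_ball (μ := volume) c hr
  have hosc_f0 : 0 ≤ ⨍ y in ball c r, |f y - ballAvg f c r| :=
    average_nonneg (.of_forall fun _ => abs_nonneg _)
  calc _ ≤ A * (⨍ y in ball c r, |g y - ballAvg g c r|) +
          |ballAvg g c r| * ⨍ y in ball c r, |f y - ballAvg f c r| :=
        average_abs_mul_sub_le (hfl.integrableOn_ball c r) (hgl.integrableOn_ball c r)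
          (ae_restrict_of_ae hfA)
    _ ≤ A * G + G * (F (1 - log r) * ⨍ y in ball c r, |f y - ballAvg f c r|) := by
        rw [← mul_assoc]
        exact add_le_add (mul_le_mul_of_nonneg_left (hgosc c r hr) (nonneg_of_ae_abs_le hfA))
          (mul_le_mul_of_nonneg_right (hgavg c r hr hr1) hosc_f0)
    _ ≤ A * G + G * A :=
        add_le_add le_rfl (mul_le_mul_of_nonneg_left (hf.1 c r hr hr1) hgosc.nonneg)
    _ = 2 * A * G := by ring

lemma oscBound_mul (hfl : LocallyIntegrable f volume) (hgl : LocallyIntegrable g volume)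
    (hfA : ∀ᵐ x, |f x| ≤ A) (hf : LmoBoundF F f A) (hgosc : OscBound g G)
    (hgavg : ∀ c r, 0 < r → r ≤ 1 → |ballAvg g c r| ≤ G * F (1 - log r))
    (hglarge : ∀ c r, 1 < r → ⨍ y in ball c r, |g y| ≤ G) :
    OscBound (fun x => f x * g x) (4 * A * G) := by
  intro c r hr
  have := neZero_restrict_ball (μ := volume) c hr
  have hfg := integrableOn_ball_mul hfl hgl hfA c r
  have hA := nonneg_of_ae_abs_le hfA
  have hG := hgosc.nonneg
  rcases le_or_gt r 1 with hr1 | hr1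
  · refine (average_abs_sub_average_le hfg (ballAvg f c r * ballAvg g c r)).trans ?_
    linarith [setAverage_abs_mul_sub_le hfl hgl hfA hf hgosc hgavg c hr hr1]
  · refine (average_abs_sub_average_le hfg 0).trans ?_
    have hfg0 : ⨍ y in ball c r, |f y * g y - 0| ≤ A * ⨍ y in ball c r, |g y| := by
      rw [← average_const_mul]
      refine average_mono_of_nonneg (.of_forall fun _ => abs_nonneg _)
        ((hgl.integrableOn_ball c r).abs.const_mul A) ?_
      filter_upwards [ae_restrict_of_ae hfA] with y hy
      rw [sub_zero, abs_mul]
      exact mul_le_mul_of_nonneg_right hy (abs_nonneg _)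
    nlinarith [mul_le_mul_of_nonneg_left (hglarge c r hr1) hA, mul_nonneg hA hG]

lemma pairBoundF_mul (hF1 : ∀ x, 1 ≤ x → 1 ≤ F x) (hfl : LocallyIntegrable f volume)
    (hgl : LocallyIntegrable g volume) (hfA : ∀ᵐ x, |f x| ≤ A) (hf : LmoBoundF F f A)
    (hgosc : OscBound g G) (hgpair : PairBoundF F g G)
    (hgavg : ∀ c r, 0 < r → r ≤ 1 → |ballAvg g c r| ≤ G * F (1 - log r)) :
    PairBoundF F (fun x => f x * g x) (6 * A * G) := by
  intro c₁ r₁ c₂ r₂ h₂ h₁ h₁1 hsub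
  have h₂1 : r₂ ≤ 1 := by linarith [le_of_ball_subset_ball (by positivity) hsub]
  have hA := nonneg_of_ae_abs_le hfA
  have hG := hgosc.nonneg
  have hΦ := hF1 _ (one_le_div_one_sub_log_of_ball_subset h₂ h₁1 hsub)
  have dev : ∀ c r, 0 < r → r ≤ 1 →
      |ballAvg (fun x => f x * g x) c r - ballAvg f c r * ballAvg g c r| ≤ 2 * A * G :=
    fun c r hr hr1 =>
      have := neZero_restrict_ball (μ := volume) c hr
      (abs_average_sub_le (integrableOn_ball_mul hfl hgl hfA c r) _).trans
        (setAverage_abs_mul_sub_le hfl hgl hfA hf hgosc hgavg c hr hr1)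
  have hf₂ : |ballAvg f c₂ r₂| ≤ A :=
    have := neZero_restrict_ball (μ := volume) c₂ h₂
    abs_average_le_of_ae_abs_le (ae_restrict_of_ae hfA)
  have hg₁ := hgavg c₁ r₁ h₁ h₁1
  have hf_pair := hf.2 c₁ r₁ c₂ r₂ h₂ h₁ h₁1 hsub
  have hg_pair := hgpair c₁ r₁ c₂ r₂ h₂ h₁ h₁1 hsub
  have mid : |ballAvg f c₂ r₂ * ballAvg g c₂ r₂ - ballAvg f c₁ r₁ * ballAvg g c₁ r₁| ≤
      A * (G * F ((1 - log r₂) / (1 - log r₁))) + G * A := by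
    calc _ = |ballAvg f c₂ r₂ * (ballAvg g c₂ r₂ - ballAvg g c₁ r₁) +
            ballAvg g c₁ r₁ * (ballAvg f c₂ r₂ - ballAvg f c₁ r₁)| := by ring_nf
      _ ≤ |ballAvg f c₂ r₂| * |ballAvg g c₂ r₂ - ballAvg g c₁ r₁| +
            |ballAvg g c₁ r₁| * |ballAvg f c₂ r₂ - ballAvg f c₁ r₁| := by
          simpa only [abs_mul] using abs_add_le
            (ballAvg f c₂ r₂ * (ballAvg g c₂ r₂ - ballAvg g c₁ r₁))
            (ballAvg g c₁ r₁ * (ballAvg f c₂ r₂ - ballAvg f c₁ r₁))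
      _ ≤ A * (G * F ((1 - log r₂) / (1 - log r₁))) +
            G * F (1 - log r₁) * |ballAvg f c₂ r₂ - ballAvg f c₁ r₁| := by gcongr
      _ ≤ _ := by rw [mul_assoc]; gcongr
  have dev₁ := dev c₁ r₁ h₁ h₁1
  rw [abs_sub_comm] at dev₁
  have tri := abs_sub_le (ballAvg (fun x => f x * g x) c₂ r₂)
    (ballAvg f c₂ r₂ * ballAvg g c₂ r₂) (ballAvg (fun x => f x * g x) c₁ r₁)
  have tri' := abs_sub_le (ballAvg f c₂ r₂ * ballAvg g c₂ r₂)
    (ballAvg f c₁ r₁ * ballAvg g c₁ r₁) (ballAvg (fun x => f x * g x) c₁ r₁)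
  nlinarith [dev c₂ r₂ h₂ h₂1, mul_nonneg (mul_nonneg hA hG) (sub_nonneg.2 hΦ)]

end Product

/-- For `F ∈ 𝓕`, `1 ≤ p < ∞`, `g ∈ BMO_F ∩ Lᵖ` and `f ∈ LMO_F ∩ L^∞`,
the product `fg` lies in `BMO_F ∩ Lᵖ` with
`‖fg‖_{BMO_F} ≤ C ‖f‖_{LMO_F ∩ L^∞} ‖g‖_{BMO_F ∩ Lᵖ}`, `C` independent of `f, g`. -/
theorem product_law_bmoF :
    ∃ C : ℝ, 0 < C ∧
      ∀ (F : ℝ → ℝ), ClassF F →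
        ∀ (p : ℝ), 1 ≤ p →
          ∀ (g f : Plane → ℝ),
            MemBMOF F g → MeasureTheory.MemLp g (ENNReal.ofReal p) volume →
            MemLMOF F f → MeasureTheory.MemLp f ⊤ volume →
            (MemBMOF F (fun x => f x * g x) ∧
              MeasureTheory.MemLp (fun x => f x * g x) (ENNReal.ofReal p) volume) ∧
            bmoFNorm F (fun x => f x * g x) ≤
              C * (lmoFNorm F f + supNorm f) * (bmoFNorm F g + lpNorm p g) := by
  refine ⟨10 * holderConst, by linarith [one_le_holderConst], ?_⟩
  intro F hF p hp g f hg hgp hf hfT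
  have hF1 := hF.1
  set A := lmoFNorm F f + supNorm f
  set G := holderConst * (bmoFNorm F g + lpNorm p g)
  have hlmo := hf.lmoBoundF hF1
  have hfA : ∀ᵐ x, |f x| ≤ A := (ae_abs_le_supNorm hfT).mono fun x hx =>
    hx.trans (le_add_of_nonneg_left (hlmo.nonneg hF1))
  have hfLmo : LmoBoundF F f A := hlmo.mono (le_add_of_nonneg_right ENNReal.toReal_nonneg)
  have hB : 0 ≤ bmoFNorm F g := (hg.oscBound hF1).nonneg
  have hL : 0 ≤ lpNorm p g := ENNReal.toReal_nonneg
  have hBG : bmoFNorm F g ≤ G :=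
    (le_add_of_nonneg_right hL).trans (le_mul_of_one_le_left (by positivity) one_le_holderConst)
  have hLG : holderConst * lpNorm p g ≤ G :=
    mul_le_mul_of_nonneg_left (le_add_of_nonneg_left hB) (zero_le_one.trans one_le_holderConst)
  have hgosc : OscBound g G := (hg.oscBound hF1).mono hBG
  have hgavg := fun c r hr hr1 => abs_ballAvg_le_of_memBMOF hF1 hp hg hgp c (r := r) hr hr1
  have hosc := oscBound_mul hf.1 hg.1 hfA hfLmo hgosc hgavg
    fun c r hr => (setAverage_abs_ball_le hp hgp c (by linarith)).trans hLG
  have hpair := pairBoundF_mul hF1 hf.1 hg.1 hfA hfLmo hgosc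
    ((hg.pairBoundF hF1).mono hF1 hBG) hgavg
  have hAG : 0 ≤ A * G := mul_nonneg (nonneg_of_ae_abs_le hfA) hgosc.nonneg
  have hfgp : MemLp (fun x => f x * g x) (ENNReal.ofReal p) volume := hgp.smul hfT
  refine ⟨⟨⟨hfgp.locallyIntegrable (ENNReal.one_le_ofReal.2 hp), 6 * A * G,
    hosc.mono (by linarith), hpair⟩, hfgp⟩, ?_⟩
  calc bmoFNorm F (fun x => f x * g x) ≤ 4 * A * G + 6 * A * G :=
        bmoFNorm_le_add hF1 hosc hpair (by linarith)
    _ = _ := by ring
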